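/- arXiv:0901.3647 — 3 statements merged into one kernel-verified Lean document; each statement's English description precedes it below -/
import Mathlib

section
/- Let f : U × V → ℝ be smooth, U,V ⊆ ℝ² open. Then f satisfies both the Toda-type equation e^{2f}(∂₁₁f + ∂₂₂f) + ∂₃₃f + ∂₄₄f = 0 and the vanishing of −2(∂₁₁f+∂₂₂f) + 2e^{−2f}(∂₃₃f+∂₄₄f) if and only if ∂₁₁f+∂₂₂f = 0 and ∂₃₃f+∂₄₄f = 0. -/
noncomputable section

/-- partial derivative in the `i`-th coordinate direction on `ℝ⁴`. -/
noncomputable def pd (i : Fin 4) (f : (Fin 4 → ℝ) → ℝ) : (Fin 4 → ℝ) → ℝ :=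
  fun x => fderiv ℝ f x (Pi.single i 1)

/-- the Toda-type equation together with the vanishing of the Weyl scalar
curvature `−2(∂₁₁f+∂₂₂f) + 2e^{−2f}(∂₃₃f+∂₄₄f)` is equivalent to `f` being harmonic in
each pair of variables separately. -/
theorem stmt_5 (U V : Set (ℝ × ℝ)) (hU : IsOpen U) (hV : IsOpen V)
    (f : (Fin 4 → ℝ) → ℝ)
    (hf : ContDiffOn ℝ (⊤ : ℕ∞) f {x | (x 0, x 1) ∈ U ∧ (x 2, x 3) ∈ V}) :
    ∀ x, (x 0, x 1) ∈ U → (x 2, x 3) ∈ V →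
      ((Real.exp (2 * f x) * (pd 0 (pd 0 f) x + pd 1 (pd 1 f) x)
          + pd 2 (pd 2 f) x + pd 3 (pd 3 f) x = 0 ∧
        -2 * (pd 0 (pd 0 f) x + pd 1 (pd 1 f) x)
          + 2 * Real.exp (-2 * f x) * (pd 2 (pd 2 f) x + pd 3 (pd 3 f) x) = 0) ↔
      (pd 0 (pd 0 f) x + pd 1 (pd 1 f) x = 0 ∧ pd 2 (pd 2 f) x + pd 3 (pd 3 f) x = 0)) := by
  intro x _ _
  set a := pd 0 (pd 0 f) x + pd 1 (pd 1 f) x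
  set b := pd 2 (pd 2 f) x + pd 3 (pd 3 f) x
  have hE : Real.exp (2 * f x) > 0 := Real.exp_pos _
  have hE' : Real.exp (-2 * f x) > 0 := Real.exp_pos _
  have hmul : Real.exp (2 * f x) * Real.exp (-2 * f x) = 1 := by
    rw [← Real.exp_add]; ring_nf; exact Real.exp_zero
  constructor
  · rintro ⟨h1, h2⟩
    have h1' : Real.exp (2 * f x) * a + b = 0 := by simp only [b]; linarith
    have h2' : a = Real.exp (-2 * f x) * b := by linarith
    rw [h2', ← mul_assoc, hmul, one_mul] at h1'
    have hb : b = 0 := by linarith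
    have ha : a = 0 := by rw [h2', hb, mul_zero]
    exact ⟨ha, hb⟩
  · rintro ⟨ha, hb⟩
    exact ⟨by simp only [a, b] at ha hb ⊢; rw [ha, mul_zero]; linarith, by simp only [a, b] at ha hb ⊢; rw [ha, hb]; ring⟩
end
end

section
/- Let V = V₁ ⊕ V₂ be an orthogonal decomposition of a real inner product space, with dim V₁ = n₁ ≥ 1, dim V₂ = n₂ ≥ 1, n₁ + n₂ ≥ 3. Let ω₁ be the volume form of V₁ (pulled back to V) and ω₂ the volume form of V₂ (pulled back to V), and let λ, μ ∈ ℝ with λ ≠ 0 and μ ≠ 0, and suppose n₁ = n₂ = k. Then for any vector X ∈ V whose components X₁ ∈ V₁ and X₂ ∈ V₂ are both nonzero, X♭ ∧ (λω₁ + μω₂) ≠ 0. -/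
open scoped RealInnerProductSpace
noncomputable section

variable {V : Type*} [NormedAddCommGroup V] [InnerProductSpace ℝ V]

/-- wedge product of real-valued alternating forms (determinant convention). -/
noncomputable def wedge {k l : ℕ} (α : V [⋀^Fin k]→ₗ[ℝ] ℝ) (β : V [⋀^Fin l]→ₗ[ℝ] ℝ) :
    V [⋀^Fin (k + l)]→ₗ[ℝ] ℝ :=
  ((TensorProduct.lid ℝ ℝ).toLinearMap.compAlternatingMap (α.domCoprod β)).domDomCongr
    finSumFinEquiv

/-- a covector as a 1-form -/
noncomputable def oneForm (τ : V →ₗ[ℝ] ℝ) : V [⋀^Fin 1]→ₗ[ℝ] ℝ :=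
  AlternatingMap.ofSubsingleton ℝ V ℝ 0 τ

/-- musical isomorphism ♭ -/
noncomputable def flat (X : V) : V →ₗ[ℝ] ℝ := (innerSL ℝ X).toLinearMap

/-- musical isomorphism ♯ -/
noncomputable def sharp [FiniteDimensional ℝ V] (τ : V →ₗ[ℝ] ℝ) : V :=
  (InnerProductSpace.toDual ℝ V).symm (LinearMap.toContinuousLinearMap τ)

/-- interior product, sending a k-form to a (k-1)-form (zero for k = 0). -/
noncomputable def iprod : ∀ {m : ℕ}, V → (V [⋀^Fin m]→ₗ[ℝ] ℝ) → (V [⋀^Fin (m - 1)]→ₗ[ℝ] ℝ)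
  | 0, _, _ => 0
  | (_ + 1), X, ω => ω.curryLeft X

/-- reindexing a form along an equality of degrees. -/
noncomputable def fcast {a b : ℕ} (h : a = b) (ω : V [⋀^Fin a]→ₗ[ℝ] ℝ) :
    V [⋀^Fin b]→ₗ[ℝ] ℝ := ω.domDomCongr (finCongr h)


/-! Evaluate `X♭ ∧ (λω₁ + μω₂)` on `(X₂, e₁, …, e_k)`, where `e` is a tuple in `W` with
`ω₁ e ≠ 0` (it exists because `ω₁` only sees the `W`-components of its arguments). In the shuffle
expansion of the wedge, every term that feeds `X₂` to the `k`-form also feeds it some `e_j`, as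
`k ≥ 2`; such a tuple is killed by `ω₁` since `X₂ ∈ Wᗮ` and by `ω₂` since `e_j ∈ W`. The one
surviving term is `⟨X₁ + X₂, X₂⟩ · λ ω₁ e = λ ‖X₂‖² ω₁ e ≠ 0`. -/

theorem MultilinearMap.apply_eq_apply_starProjection {𝕜 E N ι : Type*} [RCLike 𝕜]
    [NormedAddCommGroup E] [InnerProductSpace 𝕜 E] [AddCommGroup N] [Module 𝕜 N] [Fintype ι]
    (K : Submodule 𝕜 E) [K.HasOrthogonalProjection] (f : MultilinearMap 𝕜 (fun _ : ι => E) N)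
    (hf : ∀ (v : ι → E) (i : ι), v i ∈ Kᗮ → f v = 0) (v : ι → E) :
    f v = f (fun i => K.starProjection (v i)) := by
  classical
  -- Expand each `v i = P (v i) + (v i - P (v i))`; every term but one has an argument in `Kᗮ`.
  have hv : v = (fun i => K.starProjection (v i)) + (fun i => v i - K.starProjection (v i)) := by
    ext i; simp
  rw [hv, f.map_add_univ, Fintype.sum_eq_single Finset.univ]
  · simp
  · intro s hs
    obtain ⟨i, hi⟩ : ∃ i, i ∉ s := by simpa [Finset.eq_univ_iff_forall] using hs
    exact hf _ i (by simp [hi])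

theorem MultilinearMap.exists_forall_mem_apply_ne_zero {𝕜 E N ι : Type*} [RCLike 𝕜]
    [NormedAddCommGroup E] [InnerProductSpace 𝕜 E] [AddCommGroup N] [Module 𝕜 N] [Fintype ι]
    (K : Submodule 𝕜 E) [K.HasOrthogonalProjection] (f : MultilinearMap 𝕜 (fun _ : ι => E) N)
    (hf : ∀ (v : ι → E) (i : ι), v i ∈ Kᗮ → f v = 0) (hf0 : f ≠ 0) :
    ∃ e : ι → E, (∀ i, e i ∈ K) ∧ f e ≠ 0 := by
  by_contra! h
  exact hf0 <| MultilinearMap.ext fun v => by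
    rw [f.apply_eq_apply_starProjection K hf]
    exact h _ fun i => K.starProjection_apply_mem (v i)

theorem AlternatingMap.domCoprod_apply_eq_tmul_of_forall_not_mapsTo
    {R M N₁ N₂ ιa ιb : Type*} [CommSemiring R] [AddCommMonoid M] [Module R M]
    [AddCommGroup N₁] [Module R N₁] [AddCommGroup N₂] [Module R N₂]
    [Fintype ιa] [Fintype ιb] [DecidableEq ιa] [DecidableEq ιb]
    (a : M [⋀^ιa]→ₗ[R] N₁) (b : M [⋀^ιb]→ₗ[R] N₂) (v : ιa ⊕ ιb → M)
    (h : ∀ σ : Equiv.Perm (ιa ⊕ ιb), ¬ Set.MapsTo σ (Set.range Sum.inl) (Set.range Sum.inl) →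
      a (fun i => v (σ (Sum.inl i))) ⊗ₜ[R] b (fun i => v (σ (Sum.inr i))) = 0) :
    a.domCoprod b v = a (fun i => v (Sum.inl i)) ⊗ₜ[R] b (fun i => v (Sum.inr i)) := by
  rw [domCoprod_apply, FunLike.coe_sum, Finset.sum_apply]
  refine (Fintype.sum_eq_single (Quotient.mk'' 1) fun σ hσ => ?_).trans ?_
  · induction σ using Quotient.inductionOn' with | h σ
    have hσ' : ¬ Set.MapsTo σ (Set.range Sum.inl) (Set.range Sum.inl) := fun hmaps =>
      hσ <| Quotient.sound' <| QuotientGroup.leftRel_apply.mpr <| by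
        simpa using Equiv.Perm.mem_sumCongrHom_range_of_perm_mapsTo_inl hmaps
    simp [domCoprod.summand_mk'', h σ hσ']
  · simp [domCoprod.summand_mk'']

theorem wedge_oneForm_apply_append {k : ℕ} (τ : V →ₗ[ℝ] ℝ) (β : V [⋀^Fin k]→ₗ[ℝ] ℝ)
    (x : V) (e : Fin k → V)
    (hβ : ∀ (u : Fin k → V) (i₀ : Fin k), u i₀ = x → (∀ i ≠ i₀, u i ∈ Set.range e) → β u = 0) :
    wedge (oneForm τ) β (Fin.append ![x] e) = τ x * β e := by
  have hsplit : Fin.append ![x] e ∘ finSumFinEquiv = Sum.elim ![x] e := by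
    ext (i | i) <;> simp
  rw [wedge, AlternatingMap.domDomCongr_apply, LinearMap.compAlternatingMap_apply, hsplit,
    AlternatingMap.domCoprod_apply_eq_tmul_of_forall_not_mapsTo]
  · simp [oneForm]
  intro σ hσ
  have hmoved : σ (Sum.inl 0) ∉ Set.range Sum.inl := fun h =>
    hσ <| by rintro _ ⟨a, rfl⟩; rwa [Subsingleton.elim a 0]
  obtain ⟨i₀, hi₀⟩ : ∃ i₀, σ (Sum.inr i₀) = Sum.inl 0 := by
    rcases h : σ.symm (Sum.inl 0) with a | i₀
    · obtain rfl : a = 0 := Subsingleton.elim _ _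
      exact absurd ⟨0, σ.symm_apply_eq.mp h⟩ hmoved
    · exact ⟨i₀, (σ.symm_apply_eq.mp h).symm⟩
  refine (congrArg _ (hβ _ i₀ (by simp [hi₀]) fun i hi => ?_)).trans (TensorProduct.tmul_zero _ _)
  rcases hσi : σ (Sum.inr i) with a | j
  · rw [Subsingleton.elim a 0, ← hi₀] at hσi
    exact absurd (Sum.inr_injective (σ.injective hσi)) hi
  · exact ⟨j, by simp⟩

theorem stmt_11_general {V : Type*} [NormedAddCommGroup V] [InnerProductSpace ℝ V]
    [FiniteDimensional ℝ V] (k : ℕ) (hk3 : 3 ≤ 2 * k)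
    (W : Submodule ℝ V)
    (ω₁ ω₂ : V [⋀^Fin k]→ₗ[ℝ] ℝ) (hω₁0 : ω₁ ≠ 0)
    (hω₁ : ∀ (v : Fin k → V) (i : Fin k), v i ∈ Wᗮ → ω₁ v = 0)
    (hω₂ : ∀ (v : Fin k → V) (i : Fin k), v i ∈ W → ω₂ v = 0)
    (lam mu : ℝ) (hlam : lam ≠ 0)
    (X₁ X₂ : V) (hX₁ : X₁ ∈ W) (hX₂ : X₂ ∈ Wᗮ) (hX₂0 : X₂ ≠ 0) :
    wedge (oneForm (flat (X₁ + X₂))) (lam • ω₁ + mu • ω₂) ≠ 0 := by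
  obtain ⟨e, heW, he⟩ := MultilinearMap.exists_forall_mem_apply_ne_zero W ω₁.toMultilinearMap
    hω₁ (AlternatingMap.coe_multilinearMap_injective.ne hω₁0)
  have hflat : flat (X₁ + X₂) X₂ = ‖X₂‖ ^ 2 := by
    simp [flat, (Submodule.mem_orthogonal W X₂).mp hX₂ X₁ hX₁]
  have hβe : (lam • ω₁ + mu • ω₂) e = lam * ω₁ e := by
    simp [hω₂ e ⟨0, by omega⟩ (heW _)]
  have hβ : ∀ (u : Fin k → V) (i₀ : Fin k), u i₀ = X₂ → (∀ i ≠ i₀, u i ∈ Set.range e) →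
      (lam • ω₁ + mu • ω₂) u = 0 := by
    intro u i₀ hu hrange
    obtain ⟨i₁, hi₁⟩ := Fintype.exists_ne_of_one_lt_card (by simp; omega) i₀
    obtain ⟨j, hj⟩ := hrange i₁ hi₁
    simp [hω₁ u i₀ (hu ▸ hX₂), hω₂ u i₁ (hj ▸ heW j)]
  intro h
  have h0 := DFunLike.congr_fun h (Fin.append ![X₂] e)
  rw [wedge_oneForm_apply_append _ _ _ _ hβ, hflat, hβe] at h0
  exact he (by simpa [hX₂0, hlam] using h0)

/-- for an orthogonal decomposition `V = W ⊕ Wᗮ` with both factors of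
dimension `k` and `2k ≥ 3`, volume forms `ω₁, ω₂` of the factors (pulled back to `V`),
`λ, μ ≠ 0`, and a vector `X = X₁ + X₂` with both components nonzero, one has
`X♭ ∧ (λω₁ + μω₂) ≠ 0`. -/
theorem stmt_11 {V : Type*} [NormedAddCommGroup V] [InnerProductSpace ℝ V]
    [FiniteDimensional ℝ V] (k : ℕ) (hk : 1 ≤ k) (hk3 : 3 ≤ 2 * k)
    (W : Submodule ℝ V) (hW : Module.finrank ℝ W = k) (hW' : Module.finrank ℝ Wᗮ = k)
    (ω₁ ω₂ : V [⋀^Fin k]→ₗ[ℝ] ℝ) (hω₁0 : ω₁ ≠ 0) (hω₂0 : ω₂ ≠ 0)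
    (hω₁ : ∀ (v : Fin k → V) (i : Fin k), v i ∈ Wᗮ → ω₁ v = 0)
    (hω₂ : ∀ (v : Fin k → V) (i : Fin k), v i ∈ W → ω₂ v = 0)
    (lam mu : ℝ) (hlam : lam ≠ 0) (hmu : mu ≠ 0)
    (X₁ X₂ : V) (hX₁ : X₁ ∈ W) (hX₂ : X₂ ∈ Wᗮ) (hX₁0 : X₁ ≠ 0) (hX₂0 : X₂ ≠ 0) :
    wedge (oneForm (flat (X₁ + X₂))) (lam • ω₁ + mu • ω₂) ≠ 0 :=
  stmt_11_general k hk3 W ω₁ ω₂ hω₁0 hω₁ hω₂ lam mu hlam X₁ X₂ hX₁ hX₂ hX₂0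
end
end

section
/- Let M₁, M₂ be smooth manifolds, g₁, g₂ Riemannian metrics on M₁, M₂, and f₁, f₂, f₁', f₂' : M₁ × M₂ → ℝ smooth functions. The Riemannian metrics g := e^{f₁} p₁*g₁ + e^{f₂} p₂*g₂ and g' := e^{f₁'} p₁*g₁ + e^{f₂'} p₂*g₂ on M := M₁ × M₂ are conformally equivalent (g' = e^φ g for a smooth function φ) if and only if f₁ − f₂ = f₁' − f₂'. -/
noncomputable section

/-- the product-type metrics `e^{f₁} p₁*g₁ + e^{f₂} p₂*g₂` and
`e^{f₁'} p₁*g₁ + e^{f₂'} p₂*g₂` on `M₁ × M₂` are conformally equivalent (differ by a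
smooth positive factor `e^φ`) iff `f₁ − f₂ = f₁' − f₂'`.  The manifolds `M₁, M₂` are
modeled here by normed spaces `E₁, E₂` and the metrics by families of positive definite
symmetric bilinear forms. -/
theorem stmt_13 {E₁ E₂ : Type*}
    [NormedAddCommGroup E₁] [NormedSpace ℝ E₁] [Nontrivial E₁]
    [NormedAddCommGroup E₂] [NormedSpace ℝ E₂] [Nontrivial E₂]
    (g₁ : E₁ → E₁ →ₗ[ℝ] E₁ →ₗ[ℝ] ℝ) (g₂ : E₂ → E₂ →ₗ[ℝ] E₂ →ₗ[ℝ] ℝ)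
    (hg₁sym : ∀ p u v, g₁ p u v = g₁ p v u) (hg₂sym : ∀ p u v, g₂ p u v = g₂ p v u)
    (hg₁pos : ∀ p u, u ≠ 0 → 0 < g₁ p u u) (hg₂pos : ∀ p u, u ≠ 0 → 0 < g₂ p u u)
    (f₁ f₂ f₁' f₂' : E₁ × E₂ → ℝ)
    (hf₁ : ContDiff ℝ (⊤ : ℕ∞) f₁) (hf₂ : ContDiff ℝ (⊤ : ℕ∞) f₂)
    (hf₁' : ContDiff ℝ (⊤ : ℕ∞) f₁') (hf₂' : ContDiff ℝ (⊤ : ℕ∞) f₂') :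
    (∃ φ : E₁ × E₂ → ℝ, ContDiff ℝ (⊤ : ℕ∞) φ ∧
      ∀ (x : E₁ × E₂) (u u' : E₁ × E₂),
        Real.exp (f₁' x) * g₁ x.1 u.1 u'.1 + Real.exp (f₂' x) * g₂ x.2 u.2 u'.2
          = Real.exp (φ x) *
            (Real.exp (f₁ x) * g₁ x.1 u.1 u'.1 + Real.exp (f₂ x) * g₂ x.2 u.2 u'.2)) ↔
    (∀ x : E₁ × E₂, f₁ x - f₂ x = f₁' x - f₂' x) := by
  constructor
  · rintro ⟨φ, -, hφ⟩ x
    obtain ⟨v₁, hv₁⟩ := exists_ne (0 : E₁)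
    obtain ⟨v₂, hv₂⟩ := exists_ne (0 : E₂)
    have h1 := hφ x (v₁, 0) (v₁, 0)
    have h2 := hφ x (0, v₂) (0, v₂)
    simp only [map_zero, LinearMap.zero_apply, mul_zero, add_zero, zero_add] at h1 h2
    have e1 : Real.exp (f₁' x) = Real.exp (φ x) * Real.exp (f₁ x) :=
      mul_right_cancel₀ (ne_of_gt (hg₁pos x.1 v₁ hv₁))
        (h1.trans (mul_assoc _ _ _).symm)
    have e2 : Real.exp (f₂' x) = Real.exp (φ x) * Real.exp (f₂ x) :=
      mul_right_cancel₀ (ne_of_gt (hg₂pos x.2 v₂ hv₂))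
        (h2.trans (mul_assoc _ _ _).symm)
    rw [← Real.exp_add] at e1 e2
    have e1' : f₁' x = φ x + f₁ x := Real.exp_injective e1
    have e2' : f₂' x = φ x + f₂ x := Real.exp_injective e2
    rw [e1', e2']; ring
  · intro h
    refine ⟨fun x => f₁' x - f₁ x, hf₁'.sub hf₁, fun x u u' => ?_⟩
    have h2 : f₂' x = f₁' x - f₁ x + f₂ x := by have := h x; linarith
    rw [h2, Real.exp_add]
    have h1 : Real.exp (f₁' x) = Real.exp (f₁' x - f₁ x) * Real.exp (f₁ x) := by
      rw [← Real.exp_add]; ring_nf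
    rw [h1]; ring
end
end
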